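/- Fix T > 0, τ > 0, α ≥ 0 and compact sets C₁, C₂ ⊂ ℝ^d. Then the set { f ∈ C([0,T]; ℝ^d) : there exist t₀ ∈ [τ, ∞) and a probability measure μ₀ on ℝ^d with μ₀(C₂) = 1 such that f(0) ∈ C₁ and J_{t₀,μ₀}(f) ≤ α } is totally bounded in C([0,T]; ℝ^d) with the supremum norm. -/

import Mathlib

/-! Along a path `f` of rate at most `α` the velocity splits as `ḟ = D - G` with
`∫₀ᵀ |D|² ≤ α`, and the self-interaction field `G` grows at most linearly in
`|f 0| + ∫₀ᵗ |ḟ|`: the gradients are Lipschitz, the weights `t₀ / (t₀ + t)` and `t / (t₀ + t)`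
are at most one since `t₀ ≥ τ > 0`, and `μ₀` lives on the compact set `C₂`. Grönwall's
inequality then bounds `∫₀ᵀ |ḟ|`, hence `|f|` and `|G|`, uniformly over the set, and
Cauchy–Schwarz applied to `D` yields a common modulus of continuity `√δ (α + 1) / 2 + B δ`.
Arzelà–Ascoli concludes. -/

open MeasureTheory Set

noncomputable section

abbrev Ed (d : ℕ) : Type := EuclideanSpace ℝ (Fin d)

/-- `f` is absolutely continuous on `[0,T]` with (integrable) derivative `f'`
whose norm is square integrable. -/
def HasL2Deriv {d : ℕ} (T : ℝ) (f f' : ℝ → Ed d) : Prop :=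
  IntervalIntegrable f' volume 0 T ∧
  IntervalIntegrable (fun s => ‖f' s‖ ^ 2) volume 0 T ∧
  ∀ t ∈ Icc (0:ℝ) T, f t = f 0 + ∫ s in (0:ℝ)..t, f' s

/-- The drift mismatch appearing in the rate function of the generalized
self-interacting diffusion with initial data `(t₀, μ₀)`. -/
def drift {d : ℕ} (V F : Ed d → ℝ) (t₀ : ℝ) (μ₀ : Measure (Ed d))
    (f f' : ℝ → Ed d) (t : ℝ) : Ed d :=
  f' t + gradient V (f t) + (t₀ / (t₀ + t)) • (∫ u, gradient F (f t - u) ∂μ₀)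
    + (1 / (t₀ + t)) • (∫ s in (0:ℝ)..t, gradient F (f t - f s))

open Real Filter Topology intervalIntegral
open scoped Interval

theorem add_mul_gronwallBound_zero (K ε x : ℝ) :
    ε + K * gronwallBound 0 K ε x = ε * exp (K * x) := by
  rcases eq_or_ne K 0 with rfl | hK
  · simp [gronwallBound_K0]
  · rw [gronwallBound_of_K_ne_0 hK]
    field_simp
    ring

theorem le_mul_exp_of_le_add_mul_integral {ψ : ℝ → ℝ} {a b ε K : ℝ}
    (hψ : ContinuousOn ψ (Icc a b)) (hK : 0 ≤ K)
    (h : ∀ t ∈ Icc a b, ψ t ≤ ε + K * ∫ s in a..t, ψ s) :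
    ∀ t ∈ Icc a b, ψ t ≤ ε * exp (K * (t - a)) := by
  intro t ht
  have hab : a ≤ b := ht.1.trans ht.2
  -- Extending `ψ` continuously to `ℝ` makes its primitive differentiable everywhere.
  set ψ' : ℝ → ℝ := fun s => ψ (projIcc a b hab s)
  have hψ' : Continuous ψ' :=
    hψ.comp_continuous (continuous_subtype_val.comp continuous_projIcc) fun s => Subtype.prop _
  have hprim : ∀ s ∈ Icc a b, ∫ u in a..s, ψ' u = ∫ u in a..s, ψ u := fun s hs =>
    integral_congr fun u hu => by
      simp [ψ', projIcc_of_mem hab (uIcc_subset_Icc (left_mem_Icc.2 hab) hs hu)]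
  have hderiv : ∀ s, HasDerivAt (fun s => ∫ u in a..s, ψ' u) (ψ' s) s := fun s =>
    (hψ'.integral_hasStrictDerivAt a s).hasDerivAt
  have hx := le_gronwallBound_of_liminf_deriv_right_le (δ := 0) (K := K) (ε := ε) (b := b)
    (fun s _ => (hderiv s).continuousAt.continuousWithinAt)
    (fun s _ _ hr => (hderiv s).hasDerivWithinAt.liminf_right_slope_le hr) (by simp)
    (fun s hs => by
      rw [hprim s (Ico_subset_Icc_self hs), add_comm]
      simpa [ψ', projIcc_of_mem hab (Ico_subset_Icc_self hs)] using
        h s (Ico_subset_Icc_self hs))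
    t ht
  rw [hprim t ht] at hx
  calc ψ t ≤ ε + K * ∫ s in a..t, ψ s := h t ht
    _ ≤ ε + K * gronwallBound 0 K ε (t - a) := by gcongr
    _ = ε * exp (K * (t - a)) := add_mul_gronwallBound_zero K ε _

theorem integral_le_mul_exp_of_le_add_mul_integral {φ h : ℝ → ℝ} {T a K H : ℝ}
    (hφ : IntervalIntegrable φ volume 0 T) (hh : IntervalIntegrable h volume 0 T)
    (ha : 0 ≤ a) (hK : 0 ≤ K) (hH : ∀ t ∈ Icc 0 T, ∫ s in 0..t, h s ≤ H)
    (hφh : ∀ t ∈ Icc 0 T, φ t ≤ h t + a + K * ∫ s in 0..t, φ s) :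
    ∀ t ∈ Icc 0 T, ∫ s in 0..t, φ s ≤ (H + a * T) * exp (K * t) := by
  set ψ : ℝ → ℝ := fun t => ∫ s in 0..t, φ s
  have hψ : ContinuousOn ψ (Icc 0 T) :=
    (continuousOn_primitive_interval' hφ left_mem_uIcc).mono Icc_subset_uIcc
  have hsub : ∀ t ∈ Icc 0 T, uIcc 0 t ⊆ uIcc 0 T := fun t ht =>
    uIcc_subset_uIcc_left (Icc_subset_uIcc ht)
  simpa using le_mul_exp_of_le_add_mul_integral hψ hK fun t ht => by
    have hht := hh.mono_set (hsub t ht)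
    have hψt : IntervalIntegrable (fun s => K * ψ s) volume 0 t :=
      ((hψ.mono (Icc_subset_Icc_right ht.2)).intervalIntegrable_of_Icc ht.1).const_mul K
    calc ψ t ≤ ∫ s in 0..t, (h s + a + K * ψ s) :=
          integral_mono_on ht.1 (hφ.mono_set (hsub t ht))
            ((hht.add intervalIntegrable_const).add hψt) fun s hs => hφh s ⟨hs.1, hs.2.trans ht.2⟩
      _ = (∫ s in 0..t, h s) + a * t + K * ∫ s in 0..t, ψ s := by
        rw [integral_add (hht.add intervalIntegrable_const) hψt,
          integral_add hht intervalIntegrable_const, intervalIntegral.integral_const_mul,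
          intervalIntegral.integral_const, smul_eq_mul, sub_zero, mul_comm t]
      _ ≤ H + a * T + K * ∫ s in 0..t, ψ s := by
        gcongr
        · exact hH t ht
        · exact ht.2

theorem integral_le_sqrt_mul_of_integral_sq_le {h : ℝ → ℝ} {s t α : ℝ} (hst : s ≤ t)
    (hh : IntervalIntegrable h volume s t)
    (hh2 : IntervalIntegrable (fun x => h x ^ 2) volume s t) (hα : ∫ x in s..t, h x ^ 2 ≤ α) :
    ∫ x in s..t, h x ≤ √(t - s) * (α + 1) / 2 := by
  rcases hst.eq_or_lt with rfl | hlt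
  · simp
  set r := √(t - s)
  have hr : 0 < r := sqrt_pos.2 (sub_pos.2 hlt)
  have hr2 : r ^ 2 = t - s := sq_sqrt (sub_pos.2 hlt).le
  -- Integrating `2 r y ≤ r² y² + 1`, i.e. `(r y - 1)² ≥ 0`, is Cauchy–Schwarz in disguise.
  have key : 2 * r * ∫ x in s..t, h x ≤ r ^ 2 * (α + 1) := calc
    2 * r * ∫ x in s..t, h x = ∫ x in s..t, 2 * r * h x :=
      (intervalIntegral.integral_const_mul _ _).symm
    _ ≤ ∫ x in s..t, (r ^ 2 * h x ^ 2 + 1) :=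
      integral_mono_on hst (hh.const_mul _) ((hh2.const_mul _).add intervalIntegrable_const)
        fun x _ => by nlinarith [sq_nonneg (r * h x - 1)]
    _ = r ^ 2 * (∫ x in s..t, h x ^ 2) + r ^ 2 := by
      rw [integral_add (hh2.const_mul _) intervalIntegrable_const,
        intervalIntegral.integral_const_mul, intervalIntegral.integral_const, smul_eq_mul, hr2,
        mul_one]
    _ ≤ r ^ 2 * (α + 1) := by
      rw [mul_add, mul_one]
      gcongr
  rw [le_div_iff₀ two_pos]
  nlinarith

theorem IntervalIntegrable.sq_norm_add {E : Type*} [NormedAddCommGroup E] {f G : ℝ → E}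
    {a b : ℝ} (hf : IntervalIntegrable f volume a b)
    (hf2 : IntervalIntegrable (fun t => ‖f t‖ ^ 2) volume a b)
    (hG : ContinuousOn G (uIcc a b)) :
    IntervalIntegrable (fun t => ‖f t + G t‖ ^ 2) volume a b := by
  rw [intervalIntegrable_iff] at hf hf2 ⊢
  have hfL2 : MemLp f 2 (volume.restrict (Ι a b)) :=
    (memLp_two_iff_integrable_sq_norm hf.aestronglyMeasurable).2 hf2
  have : IsFiniteMeasure (volume.restrict (Ι a b)) :=
    isFiniteMeasure_restrict.2 measure_Ioc_lt_top.ne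
  obtain ⟨C, hC⟩ := isCompact_uIcc.exists_bound_of_continuousOn hG
  have hGL2 : MemLp G 2 (volume.restrict (Ι a b)) :=
    MemLp.of_bound ((hG.mono uIoc_subset_uIcc).aestronglyMeasurable measurableSet_uIoc) C
      ((ae_restrict_iff' measurableSet_uIoc).2
        (ae_of_all _ fun t ht => hC t (uIoc_subset_uIcc ht)))
  exact (memLp_two_iff_integrable_sq_norm (hfL2.add hGL2).1).1 (hfL2.add hGL2)

theorem ContinuousMap.totallyBounded_of_norm_le_of_dist_le {X E : Type*} [PseudoMetricSpace X]
    [CompactSpace X] [NormedAddCommGroup E] [ProperSpace E] {S : Set C(X, E)} {R : ℝ}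
    {ω : ℝ → ℝ} (hω : Tendsto ω (𝓝 0) (𝓝 0))
    (hS : ∀ f ∈ S, (∀ x, ‖f x‖ ≤ R) ∧ ∀ x y, dist (f x) (f y) ≤ ω (dist x y)) :
    TotallyBounded S := by
  let e := ContinuousMap.isometryEquivBoundedOfCompact X E
  have hA : IsCompact (closure (e.symm ⁻¹' S)) :=
    BoundedContinuousFunction.arzela_ascoli (Metric.closedBall 0 R) (isCompact_closedBall 0 R) _
      (fun f x hf => mem_closedBall_zero_iff.2 ((hS _ hf).1 x))
      (Metric.equicontinuous_of_continuity_modulus ω hω _ fun x y f => (hS _ f.2).2 x y)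
  simpa only [image_preimage_eq S e.symm.surjective] using
    (hA.totallyBounded.subset subset_closure).image e.symm.isometry.uniformContinuous

section Trajectory

variable {E : Type*} [NormedAddCommGroup E] [NormedSpace ℝ E] {g f' : ℝ → E} {T : ℝ}

theorem norm_sub_le_integral_norm_of_eq_add_integral (hf' : IntervalIntegrable f' volume 0 T)
    (hg : ∀ t ∈ Icc 0 T, g t = g 0 + ∫ u in (0:ℝ)..t, f' u) {s t : ℝ} (hs : 0 ≤ s)
    (hst : s ≤ t) (ht : t ≤ T) : ‖g t - g s‖ ≤ ∫ u in s..t, ‖f' u‖ := by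
  have hsub : ∀ r ∈ Icc 0 T, uIcc 0 r ⊆ uIcc 0 T := fun r hr =>
    uIcc_subset_uIcc_left (Icc_subset_uIcc hr)
  rw [hg t ⟨hs.trans hst, ht⟩, hg s ⟨hs, hst.trans ht⟩, add_sub_add_left_eq_sub,
    integral_interval_sub_left (hf'.mono_set (hsub t ⟨hs.trans hst, ht⟩))
      (hf'.mono_set (hsub s ⟨hs, hst.trans ht⟩))]
  exact norm_integral_le_integral_norm hst

theorem norm_le_and_norm_sub_le_of_norm_deriv_le {h : ℝ → ℝ} {a K α r₁ : ℝ}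
    (hf' : IntervalIntegrable f' volume 0 T)
    (hg : ∀ t ∈ Icc 0 T, g t = g 0 + ∫ u in (0:ℝ)..t, f' u)
    (hh : IntervalIntegrable h volume 0 T)
    (hh2 : IntervalIntegrable (fun t => h t ^ 2) volume 0 T) (hhα : ∫ t in (0:ℝ)..T, h t ^ 2 ≤ α)
    (hα : 0 ≤ α) (ha : 0 ≤ a) (hK : 0 ≤ K) (hg0 : ‖g 0‖ ≤ r₁)
    (hf'h : ∀ t ∈ Icc 0 T, ‖f' t‖ ≤ h t + a + K * ∫ u in (0:ℝ)..t, ‖f' u‖) :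
    let Ψ := (√T * (α + 1) / 2 + a * T) * exp (K * T)
    (∀ t ∈ Icc 0 T, ‖g t‖ ≤ r₁ + Ψ) ∧ ∀ s ∈ Icc 0 T, ∀ t ∈ Icc 0 T,
      ‖g t - g s‖ ≤ √|t - s| * (α + 1) / 2 + (a + K * Ψ) * |t - s| := by
  intro Ψ
  have hsub : ∀ s t, 0 ≤ s → s ≤ t → t ≤ T → uIcc s t ⊆ uIcc 0 T := fun s t hs hst ht =>
    uIcc_subset_uIcc (Icc_subset_uIcc ⟨hs, hst.trans ht⟩) (Icc_subset_uIcc ⟨hs.trans hst, ht⟩)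
  have hhint : ∀ s t, 0 ≤ s → s ≤ t → t ≤ T → ∫ u in s..t, h u ≤ √(t - s) * (α + 1) / 2 :=
    fun s t hs hst ht => integral_le_sqrt_mul_of_integral_sq_le hst
      (hh.mono_set (hsub s t hs hst ht)) (hh2.mono_set (hsub s t hs hst ht))
      ((integral_mono_interval hs hst ht (ae_of_all _ fun _ => sq_nonneg _) hh2).trans hhα)
  have hψ : ∀ t ∈ Icc 0 T, ∫ u in (0:ℝ)..t, ‖f' u‖ ≤ Ψ := fun t ht => by
    have hT : 0 ≤ T := ht.1.trans ht.2
    refine (integral_le_mul_exp_of_le_add_mul_integral (H := √T * (α + 1) / 2) hf'.norm hh ha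
      hK (fun t ht => ?_) hf'h t ht).trans ?_
    · exact (hhint 0 t le_rfl ht.1 ht.2).trans (by gcongr; simpa using ht.2)
    · exact mul_le_mul_of_nonneg_left (exp_le_exp.2 (mul_le_mul_of_nonneg_left ht.2 hK))
        (by positivity)
  have hf'B : ∀ t ∈ Icc 0 T, ‖f' t‖ ≤ h t + (a + K * Ψ) := fun t ht =>
    (hf'h t ht).trans (by rw [add_assoc]; gcongr; exact hψ t ht)
  refine ⟨fun t ht => ?_, fun s hs t ht => ?_⟩
  · calc ‖g t‖ ≤ ‖g 0‖ + ‖g t - g 0‖ := norm_le_norm_add_norm_sub' _ _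
      _ ≤ r₁ + Ψ := add_le_add hg0 ((norm_sub_le_integral_norm_of_eq_add_integral hf' hg le_rfl
          ht.1 ht.2).trans (hψ t ht))
  wlog hst : s ≤ t generalizing s t
  · rw [norm_sub_rev, abs_sub_comm]
    exact this t ht s hs (le_of_not_ge hst)
  rw [abs_of_nonneg (sub_nonneg.2 hst)]
  calc ‖g t - g s‖ ≤ ∫ u in s..t, ‖f' u‖ :=
        norm_sub_le_integral_norm_of_eq_add_integral hf' hg hs.1 hst ht.2
    _ ≤ ∫ u in s..t, (h u + (a + K * Ψ)) :=
        integral_mono_on hst (hf'.norm.mono_set (hsub s t hs.1 hst ht.2))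
          ((hh.mono_set (hsub s t hs.1 hst ht.2)).add intervalIntegrable_const)
          fun u hu => hf'B u ⟨hs.1.trans hu.1, hu.2.trans ht.2⟩
    _ = (∫ u in s..t, h u) + (a + K * Ψ) * (t - s) := by
        rw [integral_add (hh.mono_set (hsub s t hs.1 hst ht.2)) intervalIntegrable_const,
          intervalIntegral.integral_const, smul_eq_mul, mul_comm]
    _ ≤ √(t - s) * (α + 1) / 2 + (a + K * Ψ) * (t - s) := by
        gcongr
        exact hhint s t hs.1 hst ht.2

end Trajectory

section SelfInteraction

variable {E : Type*} [NormedAddCommGroup E] {b k : E → E} {cb ck Lb Lk r t₀ t M : ℝ}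
  {g : ℝ → E}

theorem norm_comp_sub_le (hk : ∀ x, ‖k x‖ ≤ ck + Lk * ‖x‖) (hLk : 0 ≤ Lk) (x y : E) :
    ‖k (x - y)‖ ≤ ck + Lk * (‖x‖ + ‖y‖) :=
  (hk _).trans (by gcongr; exact norm_sub_le x y)

variable [NormedSpace ℝ E]

theorem norm_integral_comp_sub_comp_le (hk : ∀ x, ‖k x‖ ≤ ck + Lk * ‖x‖) (hLk : 0 ≤ Lk)
    (ht : 0 ≤ t) (hg : ∀ s ∈ Icc 0 t, ‖g s‖ ≤ M) :
    ‖∫ s in (0:ℝ)..t, k (g t - g s)‖ ≤ (ck + 2 * Lk * M) * t := by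
  have := norm_integral_le_of_norm_le_const (a := 0) (b := t) (C := ck + 2 * Lk * M)
    (f := fun s => k (g t - g s)) fun s hs => by
      rw [uIoc_of_le ht] at hs
      have := add_le_add (hg t ⟨ht, le_rfl⟩) (hg s ⟨hs.1.le, hs.2⟩)
      exact (norm_comp_sub_le hk hLk _ _).trans (by nlinarith)
  rwa [sub_zero, abs_of_nonneg ht] at this

variable [MeasurableSpace E] {μ₀ : Measure E}

def selfInteractionField (b k : E → E) (t₀ : ℝ) (μ₀ : Measure E) (g : ℝ → E) (t : ℝ) : E :=
  b (g t) + (t₀ / (t₀ + t)) • (∫ u, k (g t - u) ∂μ₀)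
    + (1 / (t₀ + t)) • (∫ s in (0:ℝ)..t, k (g t - g s))

theorem norm_integral_comp_sub_le [IsProbabilityMeasure μ₀]
    (hk : ∀ x, ‖k x‖ ≤ ck + Lk * ‖x‖) (hLk : 0 ≤ Lk) (hμ : ∀ᵐ u ∂μ₀, ‖u‖ ≤ r) (x : E) :
    ‖∫ u, k (x - u) ∂μ₀‖ ≤ ck + Lk * (‖x‖ + r) := by
  simpa using norm_integral_le_of_norm_le_const (μ := μ₀)
    (hμ.mono fun u hu => (norm_comp_sub_le hk hLk x u).trans (by gcongr))

theorem norm_selfInteractionField_le [IsProbabilityMeasure μ₀]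
    (hb : ∀ x, ‖b x‖ ≤ cb + Lb * ‖x‖) (hk : ∀ x, ‖k x‖ ≤ ck + Lk * ‖x‖) (hLb : 0 ≤ Lb)
    (hLk : 0 ≤ Lk) (hμ : ∀ᵐ u ∂μ₀, ‖u‖ ≤ r) (ht₀ : 0 < t₀) (ht : 0 ≤ t)
    (hg : ∀ s ∈ Icc 0 t, ‖g s‖ ≤ M) :
    ‖selfInteractionField b k t₀ μ₀ g t‖ ≤ cb + 2 * ck + Lk * r + (Lb + 3 * Lk) * M := by
  have hM : ‖g t‖ ≤ M := hg t ⟨ht, le_rfl⟩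
  have hck : 0 ≤ ck := (norm_nonneg _).trans (by simpa using hk 0)
  have hM0 : 0 ≤ M := (norm_nonneg _).trans hM
  have hpos : 0 < t₀ + t := by linarith
  have hconf : ‖b (g t)‖ ≤ cb + Lb * M := (hb _).trans (by gcongr)
  have hinit : ‖(t₀ / (t₀ + t)) • ∫ u, k (g t - u) ∂μ₀‖ ≤ ck + Lk * (M + r) := by
    rw [norm_smul, Real.norm_of_nonneg (by positivity)]
    refine (mul_le_of_le_one_left (norm_nonneg _) ((div_le_one hpos).2 (by linarith))).trans ?_
    exact (norm_integral_comp_sub_le hk hLk hμ _).trans (by gcongr)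
  have hself : ‖(1 / (t₀ + t)) • ∫ s in (0:ℝ)..t, k (g t - g s)‖ ≤ ck + 2 * Lk * M := by
    rw [norm_smul, Real.norm_of_nonneg (by positivity)]
    calc 1 / (t₀ + t) * ‖∫ s in (0:ℝ)..t, k (g t - g s)‖
        ≤ 1 / (t₀ + t) * ((ck + 2 * Lk * M) * t) := by
          gcongr; exact norm_integral_comp_sub_comp_le hk hLk ht hg
      _ = (ck + 2 * Lk * M) * (t / (t₀ + t)) := by ring
      _ ≤ ck + 2 * Lk * M :=
          mul_le_of_le_one_right (by positivity) ((div_le_one hpos).2 (by linarith))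
  rw [selfInteractionField]
  refine norm_add₃_le.trans ?_
  linarith

theorem continuousOn_selfInteractionField [OpensMeasurableSpace E] [SecondCountableTopology E]
    [IsFiniteMeasure μ₀] (hb : Continuous b) (hk : Continuous k) (hg : Continuous g)
    {C : Set E} (hC : IsCompact C) (hμC : ∀ᵐ u ∂μ₀, u ∈ C) :
    ContinuousOn (selfInteractionField b k t₀ μ₀ g) {t | t₀ + t ≠ 0} := by
  have hinit : Continuous fun t => ∫ u, k (g t - u) ∂μ₀ := by
    simpa only [Measure.restrict_eq_self_of_ae_mem hμC] using
      continuous_parametric_integral_of_continuous (μ := μ₀) (f := fun t u => k (g t - u))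
        (by fun_prop) hC
  have hself : Continuous fun t => ∫ s in (0:ℝ)..t, k (g t - g s) :=
    continuous_parametric_intervalIntegral_of_continuous (by fun_prop) continuous_id
  have hcoef : ∀ c : ℝ, ContinuousOn (fun t => c / (t₀ + t)) {t | t₀ + t ≠ 0} := fun c =>
    continuousOn_const.div (by fun_prop) fun _ ht => ht
  exact ((hb.comp hg).continuousOn.add ((hcoef t₀).smul hinit.continuousOn)).add
    ((hcoef 1).smul hself.continuousOn)

end SelfInteraction

section Lipschitz

variable {E : Type*} [NormedAddCommGroup E] {b : E → E} {L : ℝ}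

theorem norm_le_norm_zero_add_mul_norm (hb : ∀ x y, ‖b x - b y‖ ≤ L * ‖x - y‖) (x : E) :
    ‖b x‖ ≤ ‖b 0‖ + L * ‖x‖ := by
  have := hb x 0
  rw [sub_zero] at this
  linarith [norm_le_norm_add_norm_sub' (b x) (b 0)]

theorem continuous_of_norm_sub_le (hb : ∀ x y, ‖b x - b y‖ ≤ L * ‖x - y‖) : Continuous b :=
  (LipschitzWith.of_dist_le' (by simpa only [dist_eq_norm] using hb)).continuous

end Lipschitz

theorem drift_eq_add_selfInteractionField {d : ℕ} (V F : Ed d → ℝ) (t₀ : ℝ)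
    (μ₀ : Measure (Ed d)) (f f' : ℝ → Ed d) (t : ℝ) :
    drift V F t₀ μ₀ f f' t =
      f' t + selfInteractionField (gradient V) (gradient F) t₀ μ₀ f t := by
  simp only [drift, selfInteractionField]
  abel

theorem exists_norm_le_and_norm_sub_le_of_drift {d : ℕ} {V F : Ed d → ℝ} {LV LF : ℝ}
    (hLV : 0 ≤ LV) (hLF : 0 ≤ LF)
    (hVlip : ∀ x y : Ed d, ‖gradient V x - gradient V y‖ ≤ LV * ‖x - y‖)
    (hFlip : ∀ x y : Ed d, ‖gradient F x - gradient F y‖ ≤ LF * ‖x - y‖)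
    {C : Set (Ed d)} (hC : IsCompact C) {T α r₁ : ℝ} (hT : 0 ≤ T) (hα : 0 ≤ α) :
    ∃ R B : ℝ, ∀ (t₀ : ℝ) (μ₀ : Measure (Ed d)) [IsProbabilityMeasure μ₀] (g f' : ℝ → Ed d),
      0 < t₀ → (∀ᵐ u ∂μ₀, u ∈ C) → Continuous g → ‖g 0‖ ≤ r₁ → HasL2Deriv T g f' →
      ∫ t in (0:ℝ)..T, ‖drift V F t₀ μ₀ g f' t‖ ^ 2 ≤ α →
      (∀ t ∈ Icc 0 T, ‖g t‖ ≤ R) ∧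
        ∀ s ∈ Icc 0 T, ∀ t ∈ Icc 0 T,
          ‖g t - g s‖ ≤ √|t - s| * (α + 1) / 2 + B * |t - s| := by
  obtain ⟨r₂, hr₂, hCr₂⟩ := hC.isBounded.subset_closedBall_lt 0 0
  set K := LV + 3 * LF
  set a := ‖gradient V 0‖ + 2 * ‖gradient F 0‖ + LF * r₂ + K * r₁
  set Ψ := (√T * (α + 1) / 2 + a * T) * exp (K * T)
  refine ⟨r₁ + Ψ, a + K * Ψ, fun t₀ μ₀ _ g f' ht₀ hμC hg hg0 ⟨hf', hf'2, hFTC⟩ hJ => ?_⟩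
  set G := selfInteractionField (gradient V) (gradient F) t₀ μ₀ g
  have hGc : ContinuousOn G (uIcc 0 T) :=
    (continuousOn_selfInteractionField (continuous_of_norm_sub_le hVlip)
      (continuous_of_norm_sub_le hFlip) hg hC hμC).mono fun t ht => by
        rw [uIcc_of_le hT] at ht
        exact (add_pos_of_pos_of_nonneg ht₀ ht.1).ne'
  have hG : ∀ t ∈ Icc 0 T, ‖G t‖ ≤ a + K * ∫ u in (0:ℝ)..t, ‖f' u‖ := fun t ht => by
    refine (norm_selfInteractionField_le (norm_le_norm_zero_add_mul_norm hVlip)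
      (norm_le_norm_zero_add_mul_norm hFlip) hLV hLF
      (hμC.mono fun u hu => by simpa using hCr₂ hu) ht₀ ht.1
      (M := r₁ + ∫ u in (0:ℝ)..t, ‖f' u‖) fun s hs => ?_).trans (le_of_eq (by ring))
    have hst : ∫ u in (0:ℝ)..s, ‖f' u‖ ≤ ∫ u in (0:ℝ)..t, ‖f' u‖ :=
      integral_mono_interval le_rfl hs.1 hs.2 (ae_of_all _ fun _ => norm_nonneg _)
        (hf'.norm.mono_set (uIcc_subset_uIcc_left (Icc_subset_uIcc ht)))
    linarith [norm_le_norm_add_norm_sub' (g s) (g 0),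
      norm_sub_le_integral_norm_of_eq_add_integral hf' hFTC le_rfl hs.1 (hs.2.trans ht.2)]
  have ha : 0 ≤ a := by have := (norm_nonneg _).trans hg0; positivity
  simp only [drift_eq_add_selfInteractionField] at hJ
  exact norm_le_and_norm_sub_le_of_norm_deriv_le hf' hFTC (hf'.add hGc.intervalIntegrable).norm
    (hf'.sq_norm_add hf'2 hGc) hJ hα ha (by positivity) hg0 fun t ht => calc
      ‖f' t‖ = ‖(f' t + G t) - G t‖ := by rw [add_sub_cancel_right]
      _ ≤ ‖f' t + G t‖ + ‖G t‖ := norm_sub_le _ _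
      _ ≤ ‖f' t + G t‖ + a + K * ∫ u in (0:ℝ)..t, ‖f' u‖ := by linarith [hG t ht]

theorem stmt6_general {d : ℕ} (V F : Ed d → ℝ)
    (LV LF : ℝ) (hLV : 0 ≤ LV) (hLF : 0 ≤ LF)
    (hVlip : ∀ x y : Ed d, ‖gradient V x - gradient V y‖ ≤ LV * ‖x - y‖)
    (hFlip : ∀ x y : Ed d, ‖gradient F x - gradient F y‖ ≤ LF * ‖x - y‖)
    (T τ α : ℝ) (hT : 0 < T) (hτ : 0 < τ) (hα : 0 ≤ α)
    (C₁ C₂ : Set (Ed d)) (hC₁ : IsCompact C₁) (hC₂ : IsCompact C₂) :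
    TotallyBounded {f : C(↥(Icc (0:ℝ) T), Ed d) |
      ∃ t₀ : ℝ, τ ≤ t₀ ∧
      ∃ μ₀ : Measure (Ed d), IsProbabilityMeasure μ₀ ∧ μ₀ C₂ = 1 ∧
        f ⟨0, left_mem_Icc.mpr hT.le⟩ ∈ C₁ ∧
        ∃ f' : ℝ → Ed d,
          HasL2Deriv T (fun t => f (projIcc 0 T hT.le t)) f' ∧
          (∫ t in (0:ℝ)..T,
            ‖drift V F t₀ μ₀ (fun s => f (projIcc 0 T hT.le s)) f' t‖ ^ 2) ≤ α} := by
  obtain ⟨r₁, hr₁⟩ := hC₁.isBounded.subset_closedBall 0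
  obtain ⟨R, B, hRB⟩ := exists_norm_le_and_norm_sub_le_of_drift hLV hLF hVlip hFlip hC₂
    (r₁ := r₁) hT.le hα
  refine ContinuousMap.totallyBounded_of_norm_le_of_dist_le (R := R)
    (ω := fun δ => √δ * (α + 1) / 2 + B * δ)
    (by simpa using ((by fun_prop) : Continuous fun δ : ℝ => √δ * (α + 1) / 2 + B * δ).tendsto 0)
    ?_
  rintro f ⟨t₀, ht₀, μ₀, hμ₀, hμC₂, hf0, f', hf', hJ⟩
  have hμ : ∀ᵐ u ∂μ₀, u ∈ C₂ :=
    (ae_iff_measure_eq hC₂.measurableSet.nullMeasurableSet).2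
      (by rw [measure_univ]; exact hμC₂)
  obtain ⟨hbound, hmod⟩ := hRB t₀ μ₀ _ f' (hτ.trans_le ht₀) hμ
    (f.continuous.comp continuous_projIcc) (by simpa [projIcc_left] using hr₁ hf0) hf' hJ
  refine ⟨fun x => ?_, fun x y => ?_⟩
  · simpa [projIcc_val] using hbound x x.2
  · simpa [projIcc_val, dist_eq_norm, Subtype.dist_eq, Real.dist_eq] using hmod y y.2 x x.2

/-- Lemma 2.6: the union over initial data `(t₀, μ₀, x₀)` with `t₀ ≥ τ`,
`μ₀` a probability measure carried by the compact set `C₂`, and `x₀ ∈ C₁` of the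
`α`-sublevel sets of the rate functions is totally bounded in `C([0,T]; ℝ^d)`. -/
theorem stmt6 {d : ℕ} (hd : 1 ≤ d)
    (V F : Ed d → ℝ) (hV : ContDiff ℝ 2 V) (hF : ContDiff ℝ 2 F)
    (LV LF : ℝ) (hLV : 0 ≤ LV) (hLF : 0 ≤ LF)
    (hVlip : ∀ x y : Ed d, ‖gradient V x - gradient V y‖ ≤ LV * ‖x - y‖)
    (hFlip : ∀ x y : Ed d, ‖gradient F x - gradient F y‖ ≤ LF * ‖x - y‖)
    (T τ α : ℝ) (hT : 0 < T) (hτ : 0 < τ) (hα : 0 ≤ α)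
    (C₁ C₂ : Set (Ed d)) (hC₁ : IsCompact C₁) (hC₂ : IsCompact C₂) :
    TotallyBounded {f : C(↥(Icc (0:ℝ) T), Ed d) |
      ∃ t₀ : ℝ, τ ≤ t₀ ∧
      ∃ μ₀ : Measure (Ed d), IsProbabilityMeasure μ₀ ∧ μ₀ C₂ = 1 ∧
        f ⟨0, left_mem_Icc.mpr hT.le⟩ ∈ C₁ ∧
        ∃ f' : ℝ → Ed d,
          HasL2Deriv T (fun t => f (projIcc 0 T hT.le t)) f' ∧
          (∫ t in (0:ℝ)..T,
            ‖drift V F t₀ μ₀ (fun s => f (projIcc 0 T hT.le s)) f' t‖ ^ 2) ≤ α} :=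
  stmt6_general V F LV LF hLV hLF hVlip hFlip T τ α hT hτ hα C₁ C₂ hC₁ hC₂
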